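/- Let μ be the alternating bilinear map on ℝ⁵ determined (together with antisymmetry) by the nonzero brackets on the standard basis e1,…,e5: [e1,e3] = 2e1, [e3,e5] = 2e5, [e1,e5] = e3, [e3,e2] = e2, [e4,e3] = e4, [e5,e4] = e2, [e2,e1] = e4, all other brackets of basis vectors zero. Then μ satisfies the Jacobi identity (it defines a Lie algebra isomorphic to the non-trivial semidirect sum sl(2,ℝ) ⋉ ℝ²), and μ is in the null cone of the O(B)-action, where B is the bilinear form on ℝ⁵ with B(e1,e2) = B(e2,e1) = B(e3,e4) = B(e4,e3) = 1, B(e5,e5) = 1 and all other pairings of basis vectors zero (a form of signature (2,3)). -/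

import Mathlib

/-- The isometry group `O(B)` of a bilinear form `B`. -/
def IsometryGrp {V : Type*} [AddCommGroup V] [Module ℝ V]
    (B : LinearMap.BilinForm ℝ V) : Set (V ≃ₗ[ℝ] V) :=
  {A | ∀ x y, B (A x) (A y) = B x y}

/-- `μ` is in the null cone of the `O(B)`-action: `0` lies in the closure of the orbit
`O(B)·μ`, `(A·μ)(x,y) = A⁻¹(μ(Ax,Ay))`, in the topology of pointwise convergence. -/
def InNullCone {V : Type*} [AddCommGroup V] [Module ℝ V] [TopologicalSpace V]
    (B : LinearMap.BilinForm ℝ V) (μ : V → V → V) : Prop :=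
  (0 : V → V → V) ∈
    closure {f : V → V → V | ∃ A ∈ IsometryGrp B, f = fun x y => A.symm (μ (A x) (A y))}

/-- The bracket on `ℝ⁵` (standard basis `e1 = e 0, …, e5 = e 4`) given by the alternating
bilinear extension of `[e1,e3] = 2e1`, `[e3,e5] = 2e5`, `[e1,e5] = e3`, `[e3,e2] = e2`,
`[e4,e3] = e4`, `[e5,e4] = e2`, `[e2,e1] = e4`, all other brackets of basis vectors zero.
It defines a Lie algebra isomorphic to `sl(2,ℝ) ⋉ ℝ²`. -/
def sl2r2bracket : (Fin 5 → ℝ) → (Fin 5 → ℝ) → (Fin 5 → ℝ) :=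
  fun x y =>
    ![2 * (x 0 * y 2 - x 2 * y 0),
      (x 2 * y 1 - x 1 * y 2) + (x 4 * y 3 - x 3 * y 4),
      x 0 * y 4 - x 4 * y 0,
      (x 3 * y 2 - x 2 * y 3) + (x 1 * y 0 - x 0 * y 1),
      2 * (x 2 * y 4 - x 4 * y 2)]

/-- The bilinear form on `ℝ⁵` with `B(e1,e2) = B(e2,e1) = B(e3,e4) = B(e4,e3) = 1`,
`B(e5,e5) = 1` and all other pairings of basis vectors zero (signature `(2,3)`). -/
noncomputable def neutralForm5 : LinearMap.BilinForm ℝ (Fin 5 → ℝ) :=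
  Matrix.toLinearMap₂' ℝ
    (!![0,1,0,0,0; 1,0,0,0,0; 0,0,0,1,0; 0,0,1,0,0; 0,0,0,0,1] : Matrix (Fin 5) (Fin 5) ℝ)

/-!
The Jacobi identity is a direct computation. For the null cone, give `e1, …, e5` the weights
`2, -2, 1, -1, 0`: `B` pairs weight `w` only with weight `-w`, and `[eᵢ, eⱼ]` has weight
`wᵢ + wⱼ - 1`. Hence the diagonal map `eᵢ ↦ tʷⁱ eᵢ` is a `B`-isometry which conjugates `μ` to
`t • μ`, and letting `t → 0` shows that `0` lies in the closure of the orbit.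
-/

theorem sl2r2bracket_jacobi (x y z : Fin 5 → ℝ) :
    sl2r2bracket x (sl2r2bracket y z) + sl2r2bracket y (sl2r2bracket z x) +
      sl2r2bracket z (sl2r2bracket x y) = 0 := by
  funext i
  fin_cases i <;>
    simp only [sl2r2bracket, Fin.isValue, Fin.reduceFinMk, Fin.zero_eta, Fin.mk_one,
      Matrix.cons_val, Matrix.cons_val_zero, Matrix.cons_val_one, Pi.add_apply, Pi.zero_apply] <;>
    ring

theorem inNullCone_of_smul_mem_orbit {V : Type*} [AddCommGroup V] [Module ℝ V]
    [TopologicalSpace V] [ContinuousSMul ℝ V] (B : LinearMap.BilinForm ℝ V) (μ : V → V → V)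
    (h : ∀ t : ℝ, t ≠ 0 → ∃ A ∈ IsometryGrp B, ∀ x y, A.symm (μ (A x) (A y)) = t • μ x y) :
    InNullCone B μ := by
  have hlim : Filter.Tendsto (fun t : ℝ => t • μ) (nhdsWithin 0 {0}ᶜ) (nhds 0) :=
    ((continuous_id.smul continuous_const).tendsto' 0 0 (zero_smul ℝ μ)).mono_left
      nhdsWithin_le_nhds
  refine mem_closure_of_tendsto hlim (eventually_mem_nhdsWithin.mono fun t ht => ?_)
  obtain ⟨A, hA, hconj⟩ := h t ht
  exact ⟨A, hA, funext₂ fun x y => (hconj x y).symm⟩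

section DiagonalScaling

variable {R ι : Type*} [CommSemiring R]

def diagEquiv (c : ι → Rˣ) : (ι → R) ≃ₗ[R] (ι → R) :=
  LinearEquiv.piCongrRight fun i => LinearEquiv.smulOfUnit (c i)

@[simp]
theorem diagEquiv_apply (c : ι → Rˣ) (x : ι → R) (i : ι) : diagEquiv c x i = c i * x i :=
  rfl

@[simp]
theorem diagEquiv_symm_apply (c : ι → Rˣ) (x : ι → R) (i : ι) :
    (diagEquiv c).symm x i = ↑(c i)⁻¹ * x i :=
  rfl

end DiagonalScaling

theorem neutralForm5_apply (x y : Fin 5 → ℝ) :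
    neutralForm5 x y = x 0 * y 1 + x 1 * y 0 + x 2 * y 3 + x 3 * y 2 + x 4 * y 4 := by
  simp [neutralForm5, Matrix.toLinearMap₂'_apply, Fin.sum_univ_five]

def sl2r2Scaling (t : ℝˣ) : (Fin 5 → ℝ) ≃ₗ[ℝ] (Fin 5 → ℝ) :=
  diagEquiv ![t ^ 2, t⁻¹ ^ 2, t, t⁻¹, 1]

theorem sl2r2Scaling_mem_isometryGrp (t : ℝˣ) : sl2r2Scaling t ∈ IsometryGrp neutralForm5 := by
  intro x y
  simp only [sl2r2Scaling, neutralForm5_apply, diagEquiv_apply, Fin.isValue, Matrix.cons_val,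
    Matrix.cons_val_zero, Matrix.cons_val_one, Units.val_pow_eq_pow_val, Units.val_inv_eq_inv_val,
    Units.val_one, one_mul]
  field_simp

theorem sl2r2Scaling_conj_bracket (t : ℝˣ) (x y : Fin 5 → ℝ) :
    (sl2r2Scaling t).symm (sl2r2bracket (sl2r2Scaling t x) (sl2r2Scaling t y)) =
      (t : ℝ) • sl2r2bracket x y := by
  funext i
  fin_cases i <;>
    simp only [sl2r2Scaling, sl2r2bracket, diagEquiv_apply, diagEquiv_symm_apply, Fin.isValue,
      Fin.reduceFinMk, Fin.zero_eta, Fin.mk_one, Matrix.cons_val, Matrix.cons_val_zero,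
      Matrix.cons_val_one, Units.val_pow_eq_pow_val, Units.val_inv_eq_inv_val, Units.val_one,
      inv_pow, inv_inv, inv_one, one_mul, Pi.smul_apply, smul_eq_mul] <;>
    field_simp

theorem sl2r2_jacobi_and_in_null_cone :
    (∀ x y z : Fin 5 → ℝ,
      sl2r2bracket x (sl2r2bracket y z) + sl2r2bracket y (sl2r2bracket z x) +
        sl2r2bracket z (sl2r2bracket x y) = 0) ∧
    InNullCone neutralForm5 sl2r2bracket := by
  refine ⟨sl2r2bracket_jacobi, inNullCone_of_smul_mem_orbit _ _ fun t ht => ?_⟩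
  exact ⟨sl2r2Scaling (Units.mk0 t ht), sl2r2Scaling_mem_isometryGrp _,
    sl2r2Scaling_conj_bracket _⟩
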